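/- Entropy bound on lagged causally conditioned directed information: For any random variables (x_t, i_t, w_t), t = 1, ..., T, taking values in finite sets, H[(i_1,...,i_T)] ≥ Σ_{t=1}^T I[x^t; i_t | (i^{t-1}, w^{t-1})], i.e., the joint entropy of i^T is at least the lagged causally conditioned directed information I(x^T → i^T ‖ w^{T-1}). -/

import Mathlib

/-!
Each summand `I[x^t; i_t | i^{t-1}, w^{t-1}]` is at most `H[i_t | i^{t-1}, w^{t-1}]`, and by
submodularity of entropy (a consequence of Gibbs' inequality) dropping `w^{t-1}` from the condition
can only increase this, to `H[i_t | i^{t-1}] = H[i^t] - H[i^{t-1}]`. These bounds telescope to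
`H[i^T] - H[i^0] ≤ H[i^T]`.
-/

open MeasureTheory ProbabilityTheory Finset

/-- Shannon entropy (base 2) of a random variable with values in a finite type. -/
noncomputable def shEnt {Ω : Type*} [MeasurableSpace Ω] {S : Type*} [Fintype S]
    (μ : Measure Ω) (X : Ω → S) : ℝ :=
  -∑ s : S, ((μ (X ⁻¹' {s})).toReal * Real.logb 2 (μ (X ⁻¹' {s})).toReal)

/-- Mutual information (base 2). -/
noncomputable def mutInf {Ω : Type*} [MeasurableSpace Ω] {S T : Type*} [Fintype S] [Fintype T]
    (μ : Measure Ω) (X : Ω → S) (Y : Ω → T) : ℝ :=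
  shEnt μ X + shEnt μ Y - shEnt μ (fun ω => (X ω, Y ω))

/-- Conditional mutual information (base 2), `I[X ; Y | Z]`. -/
noncomputable def condMutInf {Ω : Type*} [MeasurableSpace Ω] {S T U : Type*}
    [Fintype S] [Fintype T] [Fintype U]
    (μ : Measure Ω) (X : Ω → S) (Y : Ω → T) (Z : Ω → U) : ℝ :=
  shEnt μ (fun ω => (X ω, Z ω)) + shEnt μ (fun ω => (Y ω, Z ω))
    - shEnt μ (fun ω => (X ω, Y ω, Z ω)) - shEnt μ Z

/-- The history `a^t = (a_1, …, a_t)` of a process (0-indexed: the first `t` variables). -/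
def hist {Ω : Type*} {α : ℕ → Type*} (x : (i : ℕ) → Ω → α i) (t : ℕ) :
    Ω → ((i : Fin t) → α i) :=
  fun ω i => x i ω

open Real

theorem Real.sum_mul_logb_le_sum_mul_logb {ι : Type*} (s : Finset ι) {b : ℝ} (hb : 1 < b)
    {p q : ι → ℝ} (hp : ∀ i ∈ s, 0 ≤ p i) (hq : ∀ i ∈ s, 0 ≤ q i)
    (hpq : ∀ i ∈ s, 0 < p i → 0 < q i) (hsum : ∑ i ∈ s, q i ≤ ∑ i ∈ s, p i) :
    ∑ i ∈ s, p i * logb b (q i) ≤ ∑ i ∈ s, p i * logb b (p i) := by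
  have hlog : 0 < log b := log_pos hb
  -- `log x ≤ x - 1` at `x = q / p`
  have key : ∀ i ∈ s, p i * logb b (q i) ≤ p i * logb b (p i) + (q i - p i) / log b := by
    intro i hi
    rcases (hp i hi).eq_or_lt with h0 | hpos
    · simpa [← h0] using div_nonneg (hq i hi) hlog.le
    · have hqpos := hpq i hi hpos
      have hlin : p i * log (q i) - p i * log (p i) ≤ q i - p i := by
        have := mul_le_mul_of_nonneg_left
          (log_le_sub_one_of_pos (div_pos hqpos hpos)) hpos.le
        rwa [log_div hqpos.ne' hpos.ne', mul_sub_one, mul_div_cancel₀ _ hpos.ne', mul_sub]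
          at this
      have hdiv := div_le_div_of_nonneg_right hlin hlog.le
      simp only [logb] at hdiv ⊢
      rw [sub_div, mul_div_assoc, mul_div_assoc] at hdiv
      linarith
  calc ∑ i ∈ s, p i * logb b (q i)
      ≤ ∑ i ∈ s, (p i * logb b (p i) + (q i - p i) / log b) := sum_le_sum key
    _ = ∑ i ∈ s, p i * logb b (p i) + (∑ i ∈ s, q i - ∑ i ∈ s, p i) / log b := by
      rw [sum_add_distrib, ← sum_div, sum_sub_distrib]
    _ ≤ ∑ i ∈ s, p i * logb b (p i) := by
      have : (∑ i ∈ s, q i - ∑ i ∈ s, p i) / log b ≤ 0 :=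
        div_nonpos_of_nonpos_of_nonneg (by linarith) hlog.le
      linarith

section Entropy

variable {Ω : Type*} [MeasurableSpace Ω] {μ : Measure Ω} {S S' : Type*}

lemma measureReal_preimage_singleton_le_comp [IsFiniteMeasure μ] (X : Ω → S) (g : S → S')
    (x : S) : μ.real (X ⁻¹' {x}) ≤ μ.real ((fun ω => g (X ω)) ⁻¹' {g x}) :=
  measureReal_mono fun ω (h : X ω = x) => congrArg g h

variable [Fintype S] [Fintype S']

lemma shEnt_eq_measureReal (X : Ω → S) :
    shEnt μ X = -∑ s, μ.real (X ⁻¹' {s}) * logb 2 (μ.real (X ⁻¹' {s})) := rfl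

lemma shEnt_nonneg [IsProbabilityMeasure μ] (X : Ω → S) : 0 ≤ shEnt μ X := by
  rw [shEnt_eq_measureReal, neg_nonneg]
  exact sum_nonpos fun s _ => mul_nonpos_of_nonneg_of_nonpos measureReal_nonneg
    (logb_nonpos one_lt_two measureReal_nonneg measureReal_le_one)

variable [MeasurableSpace S] [MeasurableSingletonClass S]

lemma sum_measureReal_preimage_singleton_inter [IsFiniteMeasure μ] {X : Ω → S}
    (hX : Measurable X) (E : Set Ω) : ∑ x, μ.real (X ⁻¹' {x} ∩ E) = μ.real E := by
  have := sum_measureReal_preimage_singleton (μ := μ.restrict E) univ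
    (fun x _ => hX (measurableSet_singleton x))
  simpa [measureReal_restrict_apply (hX (measurableSet_singleton _))] using this

lemma sum_measureReal_comp_mul [IsFiniteMeasure μ] {X : Ω → S} (hX : Measurable X)
    (g : S → S') (f : S' → ℝ) :
    ∑ y, μ.real ((fun ω => g (X ω)) ⁻¹' {y}) * f y = ∑ x, μ.real (X ⁻¹' {x}) * f (g x) := by
  classical
  rw [← sum_fiberwise univ g]
  refine sum_congr rfl fun y _ => ?_
  have hfiber : μ.real ((fun ω => g (X ω)) ⁻¹' {y}) = ∑ x with g x = y, μ.real (X ⁻¹' {x}) := by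
    rw [sum_measureReal_preimage_singleton _ fun x _ => hX (measurableSet_singleton x)]
    congr 1
    ext ω
    simp
  rw [hfiber, sum_mul]
  exact sum_congr rfl fun x hx => by rw [(mem_filter.1 hx).2]

lemma shEnt_comp [IsFiniteMeasure μ] {X : Ω → S} (hX : Measurable X) (g : S → S') :
    shEnt μ (fun ω => g (X ω))
      = -∑ x, μ.real (X ⁻¹' {x}) * logb 2 (μ.real ((fun ω => g (X ω)) ⁻¹' {g x})) :=
  congrArg Neg.neg (sum_measureReal_comp_mul hX g _)

lemma shEnt_comp_le [IsFiniteMeasure μ] {X : Ω → S} (hX : Measurable X) (g : S → S') :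
    shEnt μ (fun ω => g (X ω)) ≤ shEnt μ X := by
  rw [shEnt_comp hX, shEnt_eq_measureReal, neg_le_neg_iff]
  refine sum_le_sum fun x _ => ?_
  rcases (measureReal_nonneg (μ := μ) (s := X ⁻¹' {x})).eq_or_lt with h0 | hpos
  · simp [← h0]
  · exact mul_le_mul_of_nonneg_left
      (logb_le_logb_of_le one_lt_two hpos (measureReal_preimage_singleton_le_comp X g x))
      hpos.le

lemma shEnt_comp_of_injective [IsFiniteMeasure μ] {X : Ω → S} (hX : Measurable X) {g : S → S'}
    (hg : Function.Injective g) : shEnt μ (fun ω => g (X ω)) = shEnt μ X := by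
  rw [shEnt_comp hX, shEnt_eq_measureReal]
  simp only [Set.preimage, Set.mem_singleton_iff, hg.eq_iff]

end Entropy

section Submodular

variable {Ω : Type*} [MeasurableSpace Ω] {μ : Measure Ω} {S U V : Type*}

lemma sum_measureReal_prodMk_left [IsFiniteMeasure μ] [Fintype S] [MeasurableSpace S]
    [MeasurableSingletonClass S] {X : Ω → S} (hX : Measurable X)
    (Y : Ω → U) (y : U) :
    ∑ x, μ.real ((fun ω => (X ω, Y ω)) ⁻¹' {(x, y)}) = μ.real (Y ⁻¹' {y}) := by
  simp_rw [← Set.singleton_prod_singleton, Set.mk_preimage_prod]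
  exact sum_measureReal_preimage_singleton_inter hX _

lemma sum_measureReal_prodMk_right [IsFiniteMeasure μ] [Fintype U] [MeasurableSpace U]
    [MeasurableSingletonClass U] (X : Ω → S) {Y : Ω → U}
    (hY : Measurable Y) (x : S) :
    ∑ y, μ.real ((fun ω => (X ω, Y ω)) ⁻¹' {(x, y)}) = μ.real (X ⁻¹' {x}) := by
  simp_rw [← Set.singleton_prod_singleton, Set.mk_preimage_prod, Set.inter_comm (X ⁻¹' _)]
  exact sum_measureReal_preimage_singleton_inter hY _

lemma sum_measureReal_preimage_singleton_eq_one [IsProbabilityMeasure μ] [Fintype S]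
    [MeasurableSpace S] [MeasurableSingletonClass S] {X : Ω → S}
    (hX : Measurable X) : ∑ x, μ.real (X ⁻¹' {x}) = 1 := by
  simpa using sum_measureReal_preimage_singleton_inter (μ := μ) hX Set.univ

theorem shEnt_submodular [IsProbabilityMeasure μ] [Fintype S] [Fintype U] [Fintype V]
    [MeasurableSpace S] [MeasurableSpace U] [MeasurableSpace V] [MeasurableSingletonClass S]
    [MeasurableSingletonClass U] [MeasurableSingletonClass V] {X : Ω → S} {Y : Ω → U} {Z : Ω → V}
    (hX : Measurable X) (hY : Measurable Y) (hZ : Measurable Z) :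
    shEnt μ (fun ω => (X ω, Y ω, Z ω)) + shEnt μ Y
      ≤ shEnt μ (fun ω => (X ω, Y ω)) + shEnt μ (fun ω => (Y ω, Z ω)) := by
  set W := fun ω => (X ω, Y ω, Z ω)
  have hW : Measurable W := hX.prodMk (hY.prodMk hZ)
  set p := fun w => μ.real (W ⁻¹' {w})
  set L := fun xy : S × U => μ.real ((fun ω => (X ω, Y ω)) ⁻¹' {xy})
  set M := fun yz : U × V => μ.real ((fun ω => (Y ω, Z ω)) ⁻¹' {yz})
  set N := fun y => μ.real (Y ⁻¹' {y})
  have hHXY : shEnt μ (fun ω => (X ω, Y ω)) = -∑ w, p w * logb 2 (L (w.1, w.2.1)) :=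
    shEnt_comp hW fun w => (w.1, w.2.1)
  have hHYZ : shEnt μ (fun ω => (Y ω, Z ω)) = -∑ w, p w * logb 2 (M w.2) :=
    shEnt_comp hW fun w => w.2
  have hHY : shEnt μ Y = -∑ w, p w * logb 2 (N w.2.1) :=
    shEnt_comp hW fun w => w.2.1
  have hL (w) : p w ≤ L (w.1, w.2.1) :=
    measureReal_preimage_singleton_le_comp W (fun w => (w.1, w.2.1)) w
  have hM (w) : p w ≤ M w.2 := measureReal_preimage_singleton_le_comp W (fun w => w.2) w
  have hN (w) : p w ≤ N w.2.1 := measureReal_preimage_singleton_le_comp W (fun w => w.2.1) w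
  -- Gibbs' inequality against `q = P(x, y) P(y, z) / P(y)`, a probability vector even where
  -- `P(y) = 0`, since `0 * 0 / 0 = 0`
  set q := fun w : S × U × V => L (w.1, w.2.1) * M w.2 / N w.2.1
  have hq_sum : ∑ w, q w = 1 := by
    calc ∑ w, q w = ∑ y : U, (∑ x : S, L (x, y)) * (∑ z : V, M (y, z)) / N y := by
          simp only [q, Fintype.sum_prod_type, sum_mul, mul_sum, sum_div]
          rw [sum_comm]
          exact sum_congr rfl fun y _ => sum_comm
      _ = ∑ y : U, N y := by
          refine sum_congr rfl fun y _ => ?_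
          rw [sum_measureReal_prodMk_left hX, sum_measureReal_prodMk_right Y hZ, mul_self_div_self]
      _ = 1 := sum_measureReal_preimage_singleton_eq_one hY
  have hgibbs := Real.sum_mul_logb_le_sum_mul_logb univ one_lt_two (p := p) (q := q)
    (fun _ _ => measureReal_nonneg) (fun _ _ => by positivity)
    (fun w _ hw => div_pos (mul_pos (hw.trans_le (hL w)) (hw.trans_le (hM w)))
      (hw.trans_le (hN w)))
    (by rw [hq_sum, sum_measureReal_preimage_singleton_eq_one hW])
  have hsplit (w) : p w * logb 2 (q w)
      = p w * logb 2 (L (w.1, w.2.1)) + p w * logb 2 (M w.2) - p w * logb 2 (N w.2.1) := by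
    rcases (measureReal_nonneg (μ := μ) (s := W ⁻¹' {w})).eq_or_lt with h0 | hw
    · simp [p, ← h0]
    · rw [logb_div (mul_pos (hw.trans_le (hL w)) (hw.trans_le (hM w))).ne'
        (hw.trans_le (hN w)).ne', logb_mul (hw.trans_le (hL w)).ne' (hw.trans_le (hM w)).ne']
      ring
  simp only [hsplit, sum_sub_distrib, sum_add_distrib] at hgibbs
  rw [hHXY, hHYZ, hHY, shEnt_eq_measureReal]
  linarith

end Submodular

section DirectedInformation

variable {Ω : Type*} [MeasurableSpace Ω] {μ : Measure Ω}

lemma condMutInf_le_shEnt_sub [IsFiniteMeasure μ] {S U V : Type*} [Fintype S] [Fintype U]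
    [Fintype V] [MeasurableSpace S] [MeasurableSpace U] [MeasurableSpace V]
    [MeasurableSingletonClass S] [MeasurableSingletonClass U] [MeasurableSingletonClass V]
    {X : Ω → S} {Y : Ω → U} {Z : Ω → V}
    (hX : Measurable X) (hY : Measurable Y) (hZ : Measurable Z) :
    condMutInf μ X Y Z ≤ shEnt μ (fun ω => (Y ω, Z ω)) - shEnt μ Z := by
  have : shEnt μ (fun ω => (X ω, Z ω)) ≤ shEnt μ (fun ω => (X ω, Y ω, Z ω)) :=
    shEnt_comp_le (hX.prodMk (hY.prodMk hZ)) fun w => (w.1, w.2.2)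
  rw [condMutInf]
  linarith

lemma measurable_hist {α : ℕ → Type*} [∀ t, MeasurableSpace (α t)] {x : (t : ℕ) → Ω → α t}
    (hx : ∀ t, Measurable (x t)) (t : ℕ) : Measurable (hist x t) :=
  measurable_pi_lambda _ fun j => hx j

lemma shEnt_prodMk_hist [IsFiniteMeasure μ] {β : ℕ → Type*} [∀ t, Fintype (β t)]
    [∀ t, MeasurableSpace (β t)] [∀ t, MeasurableSingletonClass (β t)]
    {i : (t : ℕ) → Ω → β t} (hi : ∀ t, Measurable (i t)) (t : ℕ) :
    shEnt μ (fun ω => (i t ω, hist i t ω)) = shEnt μ (hist i (t + 1)) :=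
  shEnt_comp_of_injective (g := fun h : (j : Fin (t + 1)) → β j => (h (Fin.last t), Fin.init h))
    (measurable_hist hi (t + 1)) fun h h' e => by
      simpa using (Fin.snocEquiv fun j : Fin (t + 1) => β j).symm.injective e

end DirectedInformation

/-- The joint entropy of `i^T` is at least the lagged causally conditioned directed information
`I(x^T → i^T ‖ w^{T-1}) = Σ_t I[x^t ; i_t | (i^{t-1}, w^{t-1})]`. -/
theorem entropy_ge_lagged_causally_conditioned_directedInfo
    {Ω : Type*} [MeasurableSpace Ω] (μ : Measure Ω) [IsProbabilityMeasure μ]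
    (T : ℕ) {α β γ : ℕ → Type*}
    [∀ t, Fintype (α t)] [∀ t, Fintype (β t)] [∀ t, Fintype (γ t)]
    [∀ t, MeasurableSpace (α t)] [∀ t, MeasurableSpace (β t)] [∀ t, MeasurableSpace (γ t)]
    [∀ t, MeasurableSingletonClass (α t)] [∀ t, MeasurableSingletonClass (β t)]
    [∀ t, MeasurableSingletonClass (γ t)]
    (x : (t : ℕ) → Ω → α t) (i : (t : ℕ) → Ω → β t) (w : (t : ℕ) → Ω → γ t)
    (hx : ∀ t, Measurable (x t)) (hi : ∀ t, Measurable (i t)) (hw : ∀ t, Measurable (w t)) :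
    shEnt μ (hist i T)
      ≥ ∑ t ∈ range T,
          condMutInf μ (hist x (t + 1)) (i t) (fun ω => (hist i t ω, hist w t ω)) := by
  have hstep (t : ℕ) :
      condMutInf μ (hist x (t + 1)) (i t) (fun ω => (hist i t ω, hist w t ω))
        ≤ shEnt μ (hist i (t + 1)) - shEnt μ (hist i t) := by
    have hle := condMutInf_le_shEnt_sub (μ := μ) (measurable_hist hx (t + 1)) (hi t)
      ((measurable_hist hi t).prodMk (measurable_hist hw t))
    have hsub := shEnt_submodular (μ := μ) (hi t) (measurable_hist hi t) (measurable_hist hw t)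
    rw [← shEnt_prodMk_hist hi t]
    linarith
  calc ∑ t ∈ range T, condMutInf μ (hist x (t + 1)) (i t) (fun ω => (hist i t ω, hist w t ω))
      ≤ ∑ t ∈ range T, (shEnt μ (hist i (t + 1)) - shEnt μ (hist i t)) :=
        sum_le_sum fun t _ => hstep t
    _ = shEnt μ (hist i T) - shEnt μ (hist i 0) :=
        sum_range_sub (fun t => shEnt μ (hist i t)) T
    _ ≤ shEnt μ (hist i T) := sub_le_self _ (shEnt_nonneg _)
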